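/- Let K be a field, let D₁,…,Dₙ and E₁,…,Eₙ be finite nonempty subsets of K with Eᵢ ⊆ Dᵢ for each i, and set X = D₁ × ⋯ × Dₙ and Y = E₁ × ⋯ × Eₙ, so that Y ⊆ X are grids of points in Kⁿ. Then the ideal I₂ = I(X) : I(Y) equals I(X ∖ Y) and has GFan number 1, i.e., LT_σ(I₂) = LT_τ(I₂) for all monomial orders σ and τ. -/

import Mathlib

/-! For a point outside the grid `Y`, some `∏_{c ∈ Eᵢ} (Xᵢ - c) ∈ I(Y)` does not vanish there,
which gives `I(X) : I(Y) = I(X \ Y)`. By the Combinatorial Nullstellensatz, division by the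
`∏_{c ∈ Dᵢ} (Xᵢ - c)` shows that the leading monomial of every nonzero `f ∈ I(X)` has some
exponent `≥ #Dᵢ`. For `f ∈ I(X \ Y)`, every `f * ∏_{c ∈ Dᵢ ∩ Eᵢ} (Xᵢ - c)` lies in `I(X)`, so the
leading monomial of `f` either has some exponent `≥ #Dᵢ` or is divisible by `∏ᵢ Xᵢ ^ #(Dᵢ \ Eᵢ)`.
These monomials are leading monomials of elements of `I(X \ Y)` for every monomial order, so they
generate its leading term ideal independently of the order. -/

open MvPolynomial

/-- The leading monomial (σ-largest exponent vector in the support) of a polynomial. -/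
noncomputable def leadMonomial {n : ℕ} {K : Type*} [Field K]
    (m : MonomialOrder (Fin n)) (f : MvPolynomial (Fin n) K) : Fin n →₀ ℕ :=
  m.toSyn.symm (f.support.sup fun s => m.toSyn s)

/-- The leading term ideal of an ideal. -/
noncomputable def leadTermIdeal {n : ℕ} {K : Type*} [Field K]
    (m : MonomialOrder (Fin n)) (I : Ideal (MvPolynomial (Fin n) K)) :
    Ideal (MvPolynomial (Fin n) K) :=
  Ideal.span {g | ∃ f ∈ I, f ≠ 0 ∧ g = monomial (leadMonomial m f) (1 : K)}

/-- The vanishing ideal of a set of points of `Kⁿ`. -/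
noncomputable def vanishingIdealOfPoints {n : ℕ} {K : Type*} [Field K]
    (S : Set (Fin n → K)) : Ideal (MvPolynomial (Fin n) K) :=
  ⨅ p ∈ S, RingHom.ker (eval p)


namespace MonomialOrder

variable {σ R : Type*} [CommRing R] (m : MonomialOrder σ)

/-- The monomial `m.degree f` has nonzero coefficient in some summand `b i * g i`; the degree
bound forces that summand to have degree exactly `m.degree f`, which then dominates
`m.degree (b i)`. -/
theorem exists_degree_le_of_eq_linearCombination {ι : Type*} {b : ι → MvPolynomial σ R}
    (hb : ∀ i, IsUnit (m.leadingCoeff (b i))) {g : ι →₀ MvPolynomial σ R}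
    {f : MvPolynomial σ R} (hf : f ≠ 0) (hfg : f = Finsupp.linearCombination _ b g)
    (hdeg : ∀ i, m.degree (b i * g i) ≼[m] m.degree f) :
    ∃ i, m.degree (b i) ≤ m.degree f := by
  by_contra! h
  have hcoeff : ∀ i, (b i * g i).coeff (m.degree f) = 0 := by
    intro i
    by_contra hne
    have hgi : g i ≠ 0 := by rintro hgi; simp [hgi] at hne
    have heq : m.degree (b i * g i) = m.degree f :=
      m.toSyn.injective (le_antisymm (hdeg i) (m.le_degree (mem_support_iff.mpr hne)))
    rw [degree_mul_of_isRegular_left (hb i).isRegular hgi] at heq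
    exact h i (heq ▸ le_self_add)
  apply coeff_degree_ne_zero_iff.mpr hf
  nth_rewrite 2 [hfg]
  rw [Finsupp.linearCombination_apply, Finsupp.sum, coeff_sum]
  exact Finset.sum_eq_zero fun i _ => by rw [smul_eq_mul, mul_comm, hcoeff]

end MonomialOrder

section Grid

open Finset

variable {n : ℕ} {K : Type*} [Field K]

theorem leadMonomial_eq_degree (m : MonomialOrder (Fin n)) (f : MvPolynomial (Fin n) K) :
    leadMonomial m f = m.degree f :=
  rfl

theorem leadTermIdeal_eq_span_monomial (m : MonomialOrder (Fin n))
    {I : Ideal (MvPolynomial (Fin n) K)} {S : Set (Fin n →₀ ℕ)}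
    (hS : ∀ a ∈ S, ∃ f ∈ I, f ≠ 0 ∧ m.degree f = a)
    (hI : ∀ f ∈ I, f ≠ 0 → ∃ a ∈ S, a ≤ m.degree f) :
    leadTermIdeal m I = Ideal.span ((fun a => monomial a (1 : K)) '' S) := by
  apply le_antisymm
  · rw [leadTermIdeal, Ideal.span_le]
    rintro _ ⟨f, hf, hf0, rfl⟩
    obtain ⟨a, ha, hle⟩ := hI f hf hf0
    have hmul := Ideal.mul_mem_left _ (monomial (m.degree f - a) (1 : K))
      (Ideal.subset_span (Set.mem_image_of_mem (fun a => monomial a (1 : K)) ha))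
    rwa [monomial_mul, mul_one, tsub_add_cancel_of_le hle] at hmul
  · rw [Ideal.span_le]
    rintro _ ⟨a, ha, rfl⟩
    obtain ⟨f, hf, hf0, rfl⟩ := hS a ha
    exact Ideal.subset_span ⟨f, hf, hf0, rfl⟩

theorem mem_vanishingIdealOfPoints {S : Set (Fin n → K)} {f : MvPolynomial (Fin n) K} :
    f ∈ vanishingIdealOfPoints S ↔ ∀ p ∈ S, eval p f = 0 := by
  simp [vanishingIdealOfPoints, RingHom.mem_ker]

theorem mul_mem_vanishingIdealOfPoints_of_diff {X Y : Set (Fin n → K)}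
    {f g : MvPolynomial (Fin n) K} (hf : f ∈ vanishingIdealOfPoints (X \ Y))
    (hg : g ∈ vanishingIdealOfPoints (X ∩ Y)) : f * g ∈ vanishingIdealOfPoints X := by
  refine mem_vanishingIdealOfPoints.mpr fun p hpX => ?_
  by_cases hpY : p ∈ Y
  · rw [map_mul, mem_vanishingIdealOfPoints.mp hg p ⟨hpX, hpY⟩, mul_zero]
  · rw [map_mul, mem_vanishingIdealOfPoints.mp hf p ⟨hpX, hpY⟩, zero_mul]

noncomputable def prodXSubC (i : Fin n) (s : Finset K) : MvPolynomial (Fin n) K :=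
  ∏ c ∈ s, (X i - C c)

theorem monic_prodXSubC (m : MonomialOrder (Fin n)) (i : Fin n) (s : Finset K) :
    m.Monic (prodXSubC i s) :=
  MonomialOrder.Monic.prod fun c _ => m.monic_X_sub_C i c

theorem degree_prodXSubC (m : MonomialOrder (Fin n)) (i : Fin n) (s : Finset K) :
    m.degree (prodXSubC i s) = Finsupp.single i #s := by
  rw [prodXSubC, m.degree_prod fun c _ => (m.monic_X_sub_C i c).ne_zero]
  simp [m.degree_X_sub_C]

theorem eval_prodXSubC_eq_zero_iff {i : Fin n} {s : Finset K} {p : Fin n → K} :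
    eval p (prodXSubC i s) = 0 ↔ p i ∈ s := by
  simp [prodXSubC, prod_eq_zero_iff, sub_eq_zero]

theorem prodXSubC_mem_vanishingIdealOfPoints {S : Set (Fin n → K)} {i : Fin n} {s : Finset K}
    (h : ∀ p ∈ S, p i ∈ s) : prodXSubC i s ∈ vanishingIdealOfPoints S :=
  mem_vanishingIdealOfPoints.mpr fun p hp => eval_prodXSubC_eq_zero_iff.mpr (h p hp)

theorem colon_vanishingIdealOfPoints_grid (X : Set (Fin n → K)) (E : Fin n → Finset K) :
    (vanishingIdealOfPoints X).colon (vanishingIdealOfPoints {p | ∀ i, p i ∈ E i})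
      = vanishingIdealOfPoints (X \ {p | ∀ i, p i ∈ E i}) := by
  apply le_antisymm
  · intro f hf
    refine mem_vanishingIdealOfPoints.mpr fun p ⟨hpX, hpE⟩ => ?_
    obtain ⟨i, hi⟩ := not_forall.mp hpE
    have hmul := Submodule.mem_colon.mp hf _
      (prodXSubC_mem_vanishingIdealOfPoints (s := E i) fun q hq => hq i)
    have h0 := mem_vanishingIdealOfPoints.mp hmul p hpX
    rw [smul_eq_mul, map_mul] at h0
    exact (mul_eq_zero.mp h0).resolve_right (mt eval_prodXSubC_eq_zero_iff.mp hi)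
  · exact fun f hf => Submodule.mem_colon.mpr fun g hg =>
      mul_mem_vanishingIdealOfPoints_of_diff hf
        (mem_vanishingIdealOfPoints.mpr fun p hp => mem_vanishingIdealOfPoints.mp hg p hp.2)

theorem eq_zero_of_mem_vanishingIdealOfPoints_grid (D : Fin n → Finset K)
    {f : MvPolynomial (Fin n) K} (hf : f ∈ vanishingIdealOfPoints {p | ∀ i, p i ∈ D i})
    (hdeg : ∀ c ∈ f.support, ∀ i, c i < #(D i)) : f = 0 := by
  by_contra hf0
  obtain ⟨c, hc⟩ := support_nonempty.mpr hf0
  refine hf0 (eq_zero_of_eval_zero_at_prod_finset f D (fun i => ?_)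
    (mem_vanishingIdealOfPoints.mp hf))
  exact (degreeOf_lt_iff ((Nat.zero_le _).trans_lt (hdeg c hc i))).mpr fun c hc => hdeg c hc i

theorem exists_card_le_degree_of_mem_vanishingIdealOfPoints_grid (m : MonomialOrder (Fin n))
    (D : Fin n → Finset K) {f : MvPolynomial (Fin n) K}
    (hf : f ∈ vanishingIdealOfPoints {p | ∀ i, p i ∈ D i}) (hf0 : f ≠ 0) :
    ∃ i, #(D i) ≤ m.degree f i := by
  set b : Fin n → MvPolynomial (Fin n) K := fun i => prodXSubC i (D i)
  have hbI : ∀ i, b i ∈ vanishingIdealOfPoints {p | ∀ i, p i ∈ D i} := fun i =>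
    prodXSubC_mem_vanishingIdealOfPoints fun p hp => hp i
  have hb : ∀ i, IsUnit (m.leadingCoeff (b i)) := fun i =>
    (monic_prodXSubC m i (D i)).leadingCoeff_eq_one ▸ isUnit_one
  obtain ⟨g, r, hfgr, hdeg, hr⟩ := m.div hb f
  have hlc : Finsupp.linearCombination _ b g ∈ vanishingIdealOfPoints {p | ∀ i, p i ∈ D i} :=
    Submodule.finsuppSum_mem _ _ _ _ fun i _ => Ideal.mul_mem_left _ _ (hbI i)
  have hr0 : r = 0 := by
    refine eq_zero_of_mem_vanishingIdealOfPoints_grid D ?_ fun c hc i => ?_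
    · rw [eq_sub_of_add_eq' hfgr.symm]
      exact Submodule.sub_mem _ hf hlc
    · simpa [b, degree_prodXSubC, Finsupp.single_le_iff] using hr c hc i
  obtain ⟨i, hi⟩ := m.exists_degree_le_of_eq_linearCombination hb hf0
    (by rw [hfgr, hr0, add_zero]) hdeg
  exact ⟨i, by rwa [degree_prodXSubC, Finsupp.single_le_iff] at hi⟩

variable [DecidableEq K]

def gridDiffCorners (D E : Fin n → Finset K) : Set (Fin n →₀ ℕ) :=
  insert (∑ i, Finsupp.single i #(D i \ E i)) (Set.range fun i => Finsupp.single i #(D i))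

theorem exists_le_degree_of_mem_vanishingIdealOfPoints_grid_diff (m : MonomialOrder (Fin n))
    (D E : Fin n → Finset K) {f : MvPolynomial (Fin n) K}
    (hf : f ∈ vanishingIdealOfPoints ({p | ∀ i, p i ∈ D i} \ {p | ∀ i, p i ∈ E i}))
    (hf0 : f ≠ 0) : ∃ a ∈ gridDiffCorners D E, a ≤ m.degree f := by
  have hshift : ∀ i, ∃ j, #(D j) ≤ (m.degree f + Finsupp.single i #(D i ∩ E i)) j := by
    intro i
    have hmem := mul_mem_vanishingIdealOfPoints_of_diff hf
      (prodXSubC_mem_vanishingIdealOfPoints (i := i) (s := D i ∩ E i)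
        fun p ⟨hpD, hpE⟩ => mem_inter.mpr ⟨hpD i, hpE i⟩)
    have := exists_card_le_degree_of_mem_vanishingIdealOfPoints_grid m D hmem
      (mul_ne_zero hf0 ((monic_prodXSubC m _ _).ne_zero))
    rwa [m.degree_mul hf0 ((monic_prodXSubC m _ _).ne_zero), degree_prodXSubC] at this
  by_cases hbox : ∃ i, #(D i) ≤ m.degree f i
  · obtain ⟨i, hi⟩ := hbox
    exact ⟨_, Set.mem_insert_of_mem _ ⟨i, rfl⟩, Finsupp.single_le_iff.mpr hi⟩
  push Not at hbox
  refine ⟨_, Set.mem_insert _ _, fun j => ?_⟩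
  obtain ⟨k, hk⟩ := hshift j
  rcases eq_or_ne k j with rfl | hkj
  · have := card_sdiff_add_card_inter (D k) (E k)
    simp only [Finsupp.coe_add, Pi.add_apply, Finsupp.single_eq_same] at hk
    rw [Finsupp.coe_univ_sum_single]
    omega
  · simp only [Finsupp.coe_add, Pi.add_apply, Finsupp.single_eq_of_ne hkj, add_zero] at hk
    exact absurd hk (not_le.mpr (hbox k))

theorem leadTermIdeal_vanishingIdealOfPoints_grid_diff (m : MonomialOrder (Fin n))
    (D E : Fin n → Finset K) :
    leadTermIdeal m (vanishingIdealOfPoints ({p | ∀ i, p i ∈ D i} \ {p | ∀ i, p i ∈ E i}))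
      = Ideal.span ((fun a => monomial a (1 : K)) '' gridDiffCorners D E) := by
  refine leadTermIdeal_eq_span_monomial m ?_
    fun f hf hf0 => exists_le_degree_of_mem_vanishingIdealOfPoints_grid_diff m D E hf hf0
  rintro a (rfl | ⟨i, rfl⟩)
  · refine ⟨∏ i, prodXSubC i (D i \ E i), ?_,
      prod_ne_zero_iff.mpr fun i _ => (monic_prodXSubC m _ _).ne_zero, ?_⟩
    · refine mem_vanishingIdealOfPoints.mpr fun p ⟨hpD, hpE⟩ => ?_
      obtain ⟨i, hi⟩ := not_forall.mp hpE
      rw [map_prod]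
      exact prod_eq_zero (mem_univ i)
        (eval_prodXSubC_eq_zero_iff.mpr (mem_sdiff.mpr ⟨hpD i, hi⟩))
    · rw [m.degree_prod fun i _ => (monic_prodXSubC m _ _).ne_zero]
      simp only [degree_prodXSubC]
  · exact ⟨prodXSubC i (D i), prodXSubC_mem_vanishingIdealOfPoints fun p hp => hp.1 i,
      (monic_prodXSubC m _ _).ne_zero, degree_prodXSubC m i _⟩

end Grid

theorem grid_minus_grid_GFanNum_one_general
    {n : ℕ} {K : Type*} [Field K]
    (D E : Fin n → Finset K)
    (X Y : Set (Fin n → K))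
    (hX : X = {p | ∀ i, p i ∈ D i}) (hY : Y = {p | ∀ i, p i ∈ E i}) :
    (vanishingIdealOfPoints X).colon (vanishingIdealOfPoints Y)
        = vanishingIdealOfPoints (X \ Y) ∧
      ∀ m τ : MonomialOrder (Fin n),
        leadTermIdeal m ((vanishingIdealOfPoints X).colon (vanishingIdealOfPoints Y))
          = leadTermIdeal τ ((vanishingIdealOfPoints X).colon (vanishingIdealOfPoints Y)) := by
  classical
  subst hX hY
  have hcolon := colon_vanishingIdealOfPoints_grid {p | ∀ i, p i ∈ D i} E
  refine ⟨hcolon, fun m τ => ?_⟩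
  rw [hcolon, leadTermIdeal_vanishingIdealOfPoints_grid_diff m,
    leadTermIdeal_vanishingIdealOfPoints_grid_diff τ]

/-- If `Y ⊆ X` are grids of points, then `I(X) : I(Y) = I(X ∖ Y)` and this ideal has
GFan number 1. -/
theorem grid_minus_grid_GFanNum_one
    {n : ℕ} {K : Type*} [Field K]
    (D E : Fin n → Finset K) (hD : ∀ i, (D i).Nonempty) (hE : ∀ i, (E i).Nonempty)
    (hED : ∀ i, E i ⊆ D i)
    (X Y : Set (Fin n → K))
    (hX : X = {p | ∀ i, p i ∈ D i}) (hY : Y = {p | ∀ i, p i ∈ E i}) :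
    (vanishingIdealOfPoints X).colon (vanishingIdealOfPoints Y)
        = vanishingIdealOfPoints (X \ Y) ∧
      ∀ m τ : MonomialOrder (Fin n),
        leadTermIdeal m ((vanishingIdealOfPoints X).colon (vanishingIdealOfPoints Y))
          = leadTermIdeal τ ((vanishingIdealOfPoints X).colon (vanishingIdealOfPoints Y)) :=
  grid_minus_grid_GFanNum_one_general D E X Y hX hY
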